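/- For an undirected graph G and integer τ ≥ 1, the polytope P₁^τ(G) = { x ∈ ℝ^{E⁺∪E⁻} : x_{e⁺} ≥ 1, x_{e⁻} ≥ 1, x_{e⁺}+x_{e⁻} = τ for all e ∈ E, and x(δ⁺(U)) ≥ τ for all nonempty proper U ⊆ V } is an integral polytope (all its vertices are integral). -/

import Mathlib

open Finset

variable {V E : Type*} [Fintype V] [DecidableEq V] [Fintype E] [DecidableEq E]

/-- The arcs leaving the vertex set `U` (generic in the arc type). -/
def outArcs {A : Type*} [Fintype A] (src tgt : A → V) (U : Finset V) : Finset A :=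
  univ.filter fun a => src a ∈ U ∧ tgt a ∉ U

/-- Source of an arc of the bidirected graph `E × Bool`: `(e, true) = e⁺` goes from `s e` to
`t e`, and `(e, false) = e⁻` goes from `t e` to `s e`. -/
def bsrc (s t : E → V) (p : E × Bool) : V := if p.2 then s p.1 else t p.1

/-- Target of an arc of the bidirected graph `E × Bool`. -/
def btgt (s t : E → V) (p : E × Bool) : V := if p.2 then t p.1 else s p.1

/-- A strongly connected orientation of the graph with edges `E` and endpoints `s`, `t`:
a choice `O` of one direction per edge such that every nonempty proper cut has a leaving arc. -/
def IsSCO (s t : E → V) (O : E → Bool) : Prop :=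
  ∀ U : Finset V, U.Nonempty → U ≠ univ →
    ∃ e : E, (e, O e) ∈ outArcs (bsrc s t) (btgt s t) U

/-!
Write `g e = x (e, true)`; then `x (e, false) = τ - g e`, and the cut constraint of `U` reads
`∑ₑ cutSign U e * g e ≥ τ - τ · #(edges entering U)`. Suppose the vertex `x` is fractional and
let `F` be the set of edges on which `g` is fractional. Cut sums are submodular, so tight cuts
are closed under uncrossing, and the rows of a maximal cross-free family `L` of tight cuts span
all tight rows. Complementing the members of `L` that contain a fixed vertex makes `L` laminar.
For a laminar family whose rows have integral products with `g` on `F`, a minimal member is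
crossed by no edge of `F` (drop it), by exactly one (then `g` is integral there), or by several,
and rerouting the crossing edges removes that member. The induction produces a nonzero `d`
supported on `F` and orthogonal to every tight row, and `x ± η d` lies in the polytope for small
`η`, so `x` is not extreme.
-/

open Filter Topology

section CrossFree

variable {α : Type*} [BooleanAlgebra α]

def CrossFree (a b : α) : Prop :=
  a ≤ b ∨ b ≤ a ∨ Disjoint a b ∨ Codisjoint a b

theorem CrossFree.symm {a b : α} (h : CrossFree a b) : CrossFree b a := by
  rcases h with h | h | h | h
  exacts [Or.inr (Or.inl h), Or.inl h, Or.inr (Or.inr (Or.inl h.symm)),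
    Or.inr (Or.inr (Or.inr h.symm))]

instance : Std.Symm (CrossFree : α → α → Prop) := ⟨fun _ _ => CrossFree.symm⟩

theorem crossFree_comm {a b : α} : CrossFree a b ↔ CrossFree b a :=
  ⟨CrossFree.symm, CrossFree.symm⟩

@[simp]
theorem crossFree_compl_right {a b : α} : CrossFree a bᶜ ↔ CrossFree a b := by
  simp only [CrossFree, le_compl_iff_disjoint_right, disjoint_compl_right_iff,
    ← codisjoint_iff_compl_le_left, codisjoint_iff_compl_le_left (y := bᶜ), compl_compl]
  tauto

@[simp]
theorem crossFree_compl_left {a b : α} : CrossFree aᶜ b ↔ CrossFree a b := by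
  rw [crossFree_comm, crossFree_compl_right, crossFree_comm]

theorem CrossFree.inf {x a b : α} (ha : CrossFree x a) (hb : CrossFree x b)
    (hab : ¬ CrossFree a b) : CrossFree x (a ⊓ b) := by
  rcases hb with hb | hb | hb | hb
  · rcases ha with ha | ha | ha | ha
    · exact Or.inl (le_inf ha hb)
    · exact Or.inr (Or.inl (inf_le_left.trans ha))
    · exact Or.inr (Or.inr (Or.inl (ha.mono_right inf_le_left)))
    · exact absurd (Or.inr (Or.inr (Or.inr (ha.mono_left hb).symm))) hab
  · exact Or.inr (Or.inl (inf_le_right.trans hb))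
  · exact Or.inr (Or.inr (Or.inl (hb.mono_right inf_le_right)))
  · rcases ha with ha | ha | ha | ha
    · exact absurd (Or.inr (Or.inr (Or.inr (hb.mono_left ha)))) hab
    · exact Or.inr (Or.inl (inf_le_left.trans ha))
    · exact absurd (Or.inl (ha.symm.le_of_codisjoint hb)) hab
    · exact Or.inr (Or.inr (Or.inr (ha.inf_right hb)))

theorem CrossFree.sup {x a b : α} (ha : CrossFree x a) (hb : CrossFree x b)
    (hab : ¬ CrossFree a b) : CrossFree x (a ⊔ b) := by
  rw [← compl_compl (a ⊔ b), compl_sup, crossFree_compl_right]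
  exact (crossFree_compl_right.2 ha).inf (crossFree_compl_right.2 hb) (by simpa using hab)

open scoped Classical in
theorem card_filter_not_crossFree_lt {L : Finset α} {a b c : α} (hb : b ∈ L)
    (hab : ¬ CrossFree a b) (hcb : CrossFree c b)
    (hc : ∀ x ∈ L, CrossFree x a → CrossFree x c) :
    #{x ∈ L | ¬ CrossFree c x} < #{x ∈ L | ¬ CrossFree a x} := by
  refine (card_le_card fun x hx => ?_).trans_lt (card_erase_lt_of_mem (mem_filter.2 ⟨hb, hab⟩))
  obtain ⟨hxL, hcx⟩ := mem_filter.1 hx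
  exact mem_erase.2 ⟨by rintro rfl; exact hcx hcb, mem_filter.2 ⟨hxL, fun hax =>
    hcx (hc x hxL hax.symm).symm⟩⟩

open scoped Classical in
/-- Induction on the number of members of `L` crossed by `a`: uncrossing `a` with one of them
gives two sets crossed by fewer members (`card_filter_not_crossFree_lt`). -/
theorem eq_zero_of_maximal_crossFree {M : Type*} [AddCommGroup M] {T L : Finset α} {f : α → M}
    (hT : ∀ a ∈ T, ∀ b ∈ T, ¬ CrossFree a b → a ⊓ b ∈ T ∧ a ⊔ b ∈ T)
    (hf : ∀ a b, ¬ CrossFree a b → f (a ⊓ b) + f (a ⊔ b) = f a + f b)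
    (hL : Maximal (fun L : Finset α => L ⊆ T ∧ (L : Set α).Pairwise CrossFree) L)
    (hfL : ∀ a ∈ L, f a = 0) : ∀ a ∈ T, f a = 0 := by
  intro a ha
  induction hn : #{x ∈ L | ¬ CrossFree a x} using Nat.strong_induction_on generalizing a with
  | _ n ih =>
  by_cases hfree : ∀ b ∈ L, CrossFree a b
  · refine hfL a (of_not_not fun haL => ?_)
    have hins : insert a L ⊆ T ∧ ((insert a L : Finset α) : Set α).Pairwise CrossFree := by
      refine ⟨insert_subset ha hL.prop.1, ?_⟩
      rw [coe_insert, Set.pairwise_insert_of_symm]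
      exact ⟨hL.prop.2, fun b hb _ => hfree b hb⟩
    exact haL (hL.eq_of_le hins (subset_insert a L) ▸ mem_insert_self a L)
  push Not at hfree
  obtain ⟨b, hbL, hab⟩ := hfree
  obtain ⟨hinf, hsup⟩ := hT a ha b (hL.prop.1 hbL) hab
  have hLb : ∀ x ∈ L, CrossFree x b := fun x hx =>
    if hxb : x = b then hxb ▸ Or.inl le_rfl else hL.prop.2 hx hbL hxb
  have h₁ := ih _ (hn ▸ card_filter_not_crossFree_lt hbL hab (Or.inl inf_le_right)
    fun x hx hxa => hxa.inf (hLb x hx) hab) _ hinf rfl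
  have h₂ := ih _ (hn ▸ card_filter_not_crossFree_lt hbL hab (Or.inr (Or.inl le_sup_right))
    fun x hx hxa => hxa.sup (hLb x hx) hab) _ hsup rfl
  have := hf a b hab
  rw [h₁, h₂, hfL b hbL, add_zero, add_zero] at this
  exact this.symm

end CrossFree

noncomputable def cutSign (s t : E → V) (U : Finset V) (e : E) : ℝ :=
  (if s e ∈ U then 1 else 0) - (if t e ∈ U then 1 else 0)

omit [Fintype E] [DecidableEq E] in
theorem cutSign_compl (s t : E → V) (U : Finset V) (e : E) :
    cutSign s t Uᶜ e = -cutSign s t U e := by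
  simp only [cutSign, mem_compl]
  split_ifs <;> norm_num

section CutSign

omit [Fintype V] [Fintype E] [DecidableEq E]
variable (s t : E → V)

theorem cutSign_inter_add_cutSign_union (U W : Finset V) (e : E) :
    cutSign s t (U ∩ W) e + cutSign s t (U ∪ W) e = cutSign s t U e + cutSign s t W e := by
  simp only [cutSign, mem_inter, mem_union]
  split_ifs <;> simp_all

-- `(⊥ : Subring ℝ)` is the image of `ℤ` in `ℝ`.
theorem cutSign_mem_bot (U : Finset V) (e : E) : cutSign s t U e ∈ (⊥ : Subring ℝ) := by
  unfold cutSign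
  split_ifs <;> simp

theorem cutSign_mul_self {U : Finset V} {e : E} (he : cutSign s t U e ≠ 0) :
    cutSign s t U e * cutSign s t U e = 1 := by
  unfold cutSign at *
  split_ifs at * <;> norm_num at *

def outerEnd (U : Finset V) (e : E) : V := if s e ∈ U then t e else s e

noncomputable def orientSign (U : Finset V) (e : E) : ℝ := if s e ∉ U ∧ t e ∈ U then -1 else 1

theorem orientSign_mul_self (U : Finset V) (e : E) :
    orientSign s t U e * orientSign s t U e = 1 := by
  unfold orientSign
  split_ifs <;> norm_num

theorem orientSign_mem_bot (U : Finset V) (e : E) : orientSign s t U e ∈ (⊥ : Subring ℝ) := by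
  unfold orientSign
  split_ifs <;> simp

/-- Every edge crossing `U` is rerouted to run from the outer end of `e₁` to its own outer end, so
`e₁` becomes a loop. After reorienting the edges entering `U`, this subtracts a multiple of the
row of `U` from the row of every set nested with `U` (`cutSign_rewire`). -/
def rewireSrc (U : Finset V) (e₁ e : E) : V :=
  if (s e ∈ U ↔ t e ∈ U) then s e else outerEnd s t U e₁

def rewireTgt (U : Finset V) (e : E) : V :=
  if (s e ∈ U ↔ t e ∈ U) then t e else outerEnd s t U e

theorem cutSign_rewire {U W : Finset V} (hUW : U ⊆ W ∨ Disjoint U W) (e₁ e : E) :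
    cutSign (rewireSrc s t U e₁) (rewireTgt s t U) W e * orientSign s t U e
      = cutSign s t W e - ((if U ⊆ W then 1 else 0) - (if outerEnd s t U e₁ ∈ W then 1 else 0))
          * cutSign s t U e := by
  have hmem : ∀ v ∈ U, (v ∈ W ↔ U ⊆ W) := by
    rcases hUW with h | h
    · exact fun v hv => iff_of_true (h hv) h
    · exact fun v hv => iff_of_false (disjoint_left.1 h hv)
        fun hs => disjoint_left.1 h hv (hs hv)
  simp only [cutSign, rewireSrc, rewireTgt, outerEnd, orientSign]
  by_cases hs : s e ∈ U <;> by_cases ht : t e ∈ U <;> by_cases hW : U ⊆ W <;>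
    simp_all <;> split_ifs <;> norm_num

theorem cutSign_rewire_self {U : Finset V} {e₁ : E} (he₁ : cutSign s t U e₁ ≠ 0)
    (W : Finset V) : cutSign (rewireSrc s t U e₁) (rewireTgt s t U) W e₁ = 0 := by
  simp only [cutSign, rewireSrc, rewireTgt] at *
  split_ifs at * <;> simp_all

theorem sum_cutSign_rewire_mul {U W : Finset V} (hUW : U ⊆ W ∨ Disjoint U W) (e₁ : E)
    (F : Finset E) (h : E → ℝ) :
    ∑ e ∈ F, cutSign (rewireSrc s t U e₁) (rewireTgt s t U) W e * (orientSign s t U e * h e)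
      = ∑ e ∈ F, cutSign s t W e * h e
        - ((if U ⊆ W then 1 else 0) - (if outerEnd s t U e₁ ∈ W then 1 else 0))
          * ∑ e ∈ F, cutSign s t U e * h e := by
  rw [mul_sum, ← sum_sub_distrib]
  refine sum_congr rfl fun e _ => ?_
  rw [← mul_assoc, cutSign_rewire s t hUW]
  ring

end CutSign

section Laminar

omit [Fintype V] [Fintype E]

/-- `e₁` is a loop of the rewired graph, so its coordinate is free to cancel the row of `U`. -/
theorem exists_orthogonal_of_rewire {s t : E → V} {U : Finset V} {L : Finset (Finset V)}
    (hL : ∀ W ∈ L, U ⊆ W ∨ Disjoint U W) {F : Finset E} {e₁ : E} (he₁F : e₁ ∈ F)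
    (he₁ : cutSign s t U e₁ ≠ 0) {d' : E → ℝ} (hd'F : ∀ e ∉ F.erase e₁, d' e = 0) (hd' : d' ≠ 0)
    (hd'L : ∀ W ∈ L, ∑ e ∈ F.erase e₁,
      cutSign (rewireSrc s t U e₁) (rewireTgt s t U) W e * d' e = 0) :
    ∃ d : E → ℝ, (∀ e ∉ F, d e = 0) ∧ d ≠ 0 ∧
      ∀ W ∈ insert U L, ∑ e ∈ F, cutSign s t W e * d e = 0 := by
  set σ := orientSign s t U
  set S := ∑ e ∈ F.erase e₁, cutSign s t U e * (σ e * d' e)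
  set d := Function.update (fun e => σ e * d' e) e₁ (-cutSign s t U e₁ * S)
  have hd₁ : d e₁ = -cutSign s t U e₁ * S := Function.update_self ..
  have hd_ne : ∀ e ≠ e₁, d e = σ e * d' e := fun e he => Function.update_of_ne he _ _
  have hrowU : ∑ e ∈ F, cutSign s t U e * d e = 0 := by
    rw [← add_sum_erase F _ he₁F, hd₁,
      sum_congr rfl fun e he => by rw [hd_ne e (ne_of_mem_erase he)], ← mul_assoc,
      ← neg_mul_eq_mul_neg, cutSign_mul_self s t he₁]
    ring
  refine ⟨d, fun e he => ?_, ?_, ?_⟩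
  · rw [hd_ne e (ne_of_mem_of_not_mem he₁F he).symm, hd'F e fun h => he (mem_of_mem_erase h),
      mul_zero]
  · obtain ⟨e, he⟩ := Function.ne_iff.1 hd'
    have he₁e : e ≠ e₁ := fun h => he (hd'F e (by simp [h]))
    refine Function.ne_iff.2 ⟨e, ?_⟩
    rw [hd_ne e he₁e]
    exact mul_ne_zero (left_ne_zero_of_mul_eq_one (orientSign_mul_self s t U e)) he
  · rintro W hW
    obtain rfl | hW := mem_insert.1 hW
    · exact hrowU
    have := sum_cutSign_rewire_mul s t (hL W hW) e₁ F d
    rw [hrowU, mul_zero, sub_zero] at this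
    rw [← this, ← sum_erase _ (by rw [cutSign_rewire_self s t he₁, zero_mul]), ← hd'L W hW]
    refine sum_congr rfl fun e he => ?_
    rw [hd_ne e (ne_of_mem_erase he), ← mul_assoc (orientSign s t U e), orientSign_mul_self,
      one_mul]

theorem exists_orthogonal_of_laminar (L : Finset (Finset V))
    (hL : (L : Set (Finset V)).Pairwise fun U W => U ⊆ W ∨ W ⊆ U ∨ Disjoint U W)
    (s t : E → V) {F : Finset E} (hF : F.Nonempty) {g : E → ℝ}
    (hg : ∀ e ∈ F, g e ∉ (⊥ : Subring ℝ))
    (hLg : ∀ U ∈ L, ∑ e ∈ F, cutSign s t U e * g e ∈ (⊥ : Subring ℝ)) :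
    ∃ d : E → ℝ, (∀ e ∉ F, d e = 0) ∧ d ≠ 0 ∧ ∀ U ∈ L, ∑ e ∈ F, cutSign s t U e * d e = 0 := by
  induction L using Finset.strongInduction generalizing s t F g with
  | H L ih =>
  obtain rfl | hLne := L.eq_empty_or_nonempty
  · obtain ⟨e₀, he₀⟩ := hF
    refine ⟨Pi.single e₀ 1, fun e he => ?_, ?_, by simp⟩
    · exact Pi.single_eq_of_ne (ne_of_mem_of_not_mem he₀ he).symm _
    · exact Function.ne_iff.2 ⟨e₀, by simp⟩
  obtain ⟨U, hU⟩ := L.exists_minimal hLne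
  have hLU : L.erase U ⊂ L := erase_ssubset hU.prop
  have hLU_lam : ((L.erase U : Finset (Finset V)) : Set (Finset V)).Pairwise
      fun U W => U ⊆ W ∨ W ⊆ U ∨ Disjoint U W :=
    hL.mono (coe_subset.2 (erase_subset U L))
  have hnest : ∀ W ∈ L.erase U, U ⊆ W ∨ Disjoint U W := by
    intro W hW
    obtain ⟨hWU, hWL⟩ := mem_erase.1 hW
    rcases hL hU.prop hWL (Ne.symm hWU) with h | h | h
    · exact Or.inl h
    · exact absurd (hU.eq_of_le hWL h) hWU
    · exact Or.inr h
  set A := F.filter fun e => cutSign s t U e ≠ 0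
  have hrowU : ∀ h : E → ℝ, ∑ e ∈ A, cutSign s t U e * h e = ∑ e ∈ F, cutSign s t U e * h e :=
    fun h => sum_filter_of_ne fun e _ he => left_ne_zero_of_mul he
  obtain hA | ⟨e₁, he₁A⟩ := A.eq_empty_or_nonempty
  · obtain ⟨d, hdF, hd, hdL⟩ := ih _ hLU hLU_lam s t hF hg fun W hW => hLg W (mem_of_mem_erase hW)
    refine ⟨d, hdF, hd, fun W hW => ?_⟩
    obtain rfl | hWU := eq_or_ne W U
    · rw [← hrowU, hA, sum_empty]
    · exact hdL W (mem_erase.2 ⟨hWU, hW⟩)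
  obtain ⟨he₁F, he₁⟩ := mem_filter.1 he₁A
  obtain hA₁ | ⟨e₂, he₂A⟩ := (A.erase e₁).eq_empty_or_nonempty
  · refine absurd ?_ (hg e₁ he₁F)
    have h := hLg U hU.prop
    rw [← hrowU, ← add_sum_erase A _ he₁A, hA₁, sum_empty, add_zero] at h
    have := mul_mem (cutSign_mem_bot s t U e₁) h
    rwa [← mul_assoc, cutSign_mul_self s t he₁, one_mul] at this
  have hF' : (F.erase e₁).Nonempty :=
    ⟨e₂, mem_erase.2 ⟨ne_of_mem_erase he₂A, (mem_filter.1 (mem_of_mem_erase he₂A)).1⟩⟩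
  set σ := orientSign s t U
  have hσg : ∀ e ∈ F.erase e₁, σ e * g e ∉ (⊥ : Subring ℝ) := fun e he h => by
    have := mul_mem (orientSign_mem_bot s t U e) h
    rw [← mul_assoc, orientSign_mul_self, one_mul] at this
    exact hg e (mem_of_mem_erase he) this
  have hLσg : ∀ W ∈ L.erase U, ∑ e ∈ F.erase e₁,
      cutSign (rewireSrc s t U e₁) (rewireTgt s t U) W e * (σ e * g e) ∈ (⊥ : Subring ℝ) := by
    intro W hW
    rw [sum_erase _ (by rw [cutSign_rewire_self s t he₁, zero_mul]), sum_cutSign_rewire_mul s t (hnest W hW)]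
    exact sub_mem (hLg W (mem_of_mem_erase hW)) (mul_mem (by split_ifs <;> simp) (hLg U hU.prop))
  obtain ⟨d', hd'F, hd', hd'L⟩ := ih _ hLU hLU_lam _ _ hF' hσg hLσg
  obtain ⟨d, hdF, hd, hdL⟩ := exists_orthogonal_of_rewire hnest he₁F he₁ hd'F hd' hd'L
  exact ⟨d, hdF, hd, fun W hW => hdL W (by rwa [insert_erase hU.prop])⟩

end Laminar

omit [Fintype E] [DecidableEq E] in
theorem sum_cutSign_compl_mul (s t : E → V) (U : Finset V) (F : Finset E) (h : E → ℝ) :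
    ∑ e ∈ F, cutSign s t Uᶜ e * h e = -∑ e ∈ F, cutSign s t U e * h e := by
  simp only [cutSign_compl, neg_mul, sum_neg_distrib]

omit [Fintype E] in
/-- Complementing the members that contain a fixed vertex makes a cross-free family laminar and
changes the rows only by signs. -/
theorem exists_orthogonal_of_crossFree (L : Finset (Finset V))
    (hL : (L : Set (Finset V)).Pairwise CrossFree)
    (s t : E → V) {F : Finset E} (hF : F.Nonempty) {g : E → ℝ}
    (hg : ∀ e ∈ F, g e ∉ (⊥ : Subring ℝ))
    (hLg : ∀ U ∈ L, ∑ e ∈ F, cutSign s t U e * g e ∈ (⊥ : Subring ℝ)) :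
    ∃ d : E → ℝ, (∀ e ∉ F, d e = 0) ∧ d ≠ 0 ∧ ∀ U ∈ L, ∑ e ∈ F, cutSign s t U e * d e = 0 := by
  obtain ⟨e₀, he₀⟩ := hF
  set r := s e₀
  set flip : Finset V → Finset V := fun U => if r ∈ U then Uᶜ else U
  have hflip_sum : ∀ U (h : E → ℝ), ∑ e ∈ F, cutSign s t (flip U) e * h e
      = (if r ∈ U then -1 else 1) * ∑ e ∈ F, cutSign s t U e * h e := by
    intro U h
    simp only [flip]
    split_ifs
    · rw [sum_cutSign_compl_mul, neg_one_mul]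
    · rw [one_mul]
  have hsign : ∀ U : Finset V, (if r ∈ U then -1 else 1 : ℝ) ∈ (⊥ : Subring ℝ) ∧
      (if r ∈ U then -1 else 1 : ℝ) ≠ 0 := fun U => by split_ifs <;> simp
  have hlam : ((L.image flip : Finset (Finset V)) : Set (Finset V)).Pairwise
      fun U W => U ⊆ W ∨ W ⊆ U ∨ Disjoint U W := by
    simp only [coe_image]
    rintro _ ⟨U, hU, rfl⟩ _ ⟨W, hW, rfl⟩ hne
    have hUW : CrossFree (flip U) (flip W) := by
      have := hL hU hW fun h => hne (h ▸ rfl)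
      simp only [flip]
      split_ifs <;> simpa
    have hr : ∀ U, r ∉ flip U := fun U => by simp only [flip]; split_ifs <;> simp [*]
    rcases hUW with h | h | h | h
    · exact Or.inl h
    · exact Or.inr (Or.inl h)
    · exact Or.inr (Or.inr h)
    · have : r ∈ flip U ∪ flip W := by rw [← sup_eq_union, codisjoint_iff.1 h]; exact mem_univ r
      exact ((mem_union.1 this).elim (hr U) (hr W)).elim
  obtain ⟨d, hdF, hd, hdL⟩ := exists_orthogonal_of_laminar _ hlam s t ⟨e₀, he₀⟩ hg (by
    simp only [mem_image, forall_exists_index, and_imp, forall_apply_eq_imp_iff₂]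
    exact fun U hU => by rw [hflip_sum]; exact mul_mem (hsign U).1 (hLg U hU))
  refine ⟨d, hdF, hd, fun U hU => ?_⟩
  have := hdL _ (mem_image_of_mem flip hU)
  rw [hflip_sum] at this
  exact (mul_eq_zero.1 this).resolve_left (hsign U).2

theorem not_mem_extremePoints_of_eventually_add_smul_mem {M : Type*} [AddCommGroup M]
    [Module ℝ M] {S : Set M} {x d : M} (hd : d ≠ 0) (h : ∀ᶠ η in 𝓝 (0 : ℝ), x + η • d ∈ S) :
    x ∉ S.extremePoints ℝ := by
  intro hx
  have h₂ : ∀ᶠ η in 𝓝[>] (0 : ℝ), x + (-η) • d ∈ S ∧ x + η • d ∈ S :=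
    nhdsWithin_le_nhds (((continuous_neg.tendsto' (0 : ℝ) 0 neg_zero).eventually h).and h)
  obtain ⟨η, ⟨hη₁, hη₂⟩, hη⟩ := (h₂.and self_mem_nhdsWithin).exists
  have hseg : x ∈ openSegment ℝ (x + (-η) • d) (x + η • d) :=
    ⟨1 / 2, 1 / 2, by norm_num, by norm_num, by norm_num, by module⟩
  have := hx.2 hη₁ hη₂ hseg
  rw [add_eq_left, smul_eq_zero] at this
  exact this.elim (neg_ne_zero.2 hη.ne') hd

theorem eventually_le_add_mul {a b c : ℝ} (hab : a ≤ b) (hc : a = b → c = 0) :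
    ∀ᶠ η in 𝓝 (0 : ℝ), a ≤ b + η * c := by
  obtain h | rfl := hab.lt_or_eq
  · refine Tendsto.eventually_const_le h ?_
    simpa using ((continuous_id.mul continuous_const).const_add b).tendsto (0 : ℝ)
  · simp [hc rfl]

omit [Fintype V] in
theorem sum_outArcs_inter_add_sum_outArcs_union_le {A : Type*} [Fintype A] (src tgt : A → V)
    {y : A → ℝ} (hy : 0 ≤ y) (U W : Finset V) :
    ∑ a ∈ outArcs src tgt (U ∩ W), y a + ∑ a ∈ outArcs src tgt (U ∪ W), y a
      ≤ ∑ a ∈ outArcs src tgt U, y a + ∑ a ∈ outArcs src tgt W, y a := by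
  simp only [outArcs, sum_filter, ← sum_add_distrib]
  refine sum_le_sum fun a _ => ?_
  have := hy a
  simp only [mem_inter, mem_union]
  split_ifs <;> simp_all

omit [Fintype V] [DecidableEq E] in
theorem sum_outArcs_bidirected (s t : E → V) (U : Finset V) (y : E × Bool → ℝ) :
    ∑ p ∈ outArcs (bsrc s t) (btgt s t) U, y p
      = ∑ e, ((if s e ∈ U ∧ t e ∉ U then y (e, true) else 0)
          + (if t e ∈ U ∧ s e ∉ U then y (e, false) else 0)) := by
  rw [outArcs, sum_filter, Fintype.sum_prod_type]
  exact sum_congr rfl fun e _ => by simp [bsrc, btgt, add_comm]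

omit [Fintype V] [DecidableEq E] in
theorem sum_outArcs_of_add_eq (s t : E → V) (U : Finset V) {y : E × Bool → ℝ} {c : ℝ}
    (hy : ∀ e, y (e, true) + y (e, false) = c) :
    ∑ p ∈ outArcs (bsrc s t) (btgt s t) U, y p
      = ∑ e, cutSign s t U e * y (e, true) + c * ∑ e, if t e ∈ U ∧ s e ∉ U then 1 else 0 := by
  rw [sum_outArcs_bidirected, mul_sum, ← sum_add_distrib]
  refine sum_congr rfl fun e _ => ?_
  rw [eq_sub_of_add_eq' (hy e), cutSign]
  split_ifs <;> simp_all
  ring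

/-- The polytope `P₁^τ(G)`. -/
def nzPolytope (s t : E → V) (τ : ℕ) : Set (E × Bool → ℝ) :=
  {y | (∀ e : E, 1 ≤ y (e, true) ∧ 1 ≤ y (e, false) ∧ y (e, true) + y (e, false) = (τ : ℝ)) ∧
    ∀ U : Finset V, U.Nonempty → U ≠ univ →
      (τ : ℝ) ≤ ∑ p ∈ outArcs (bsrc s t) (btgt s t) U, y p}

def IsTightCut (s t : E → V) (τ : ℕ) (y : E × Bool → ℝ) (U : Finset V) : Prop :=
  U.Nonempty ∧ U ≠ univ ∧ ∑ p ∈ outArcs (bsrc s t) (btgt s t) U, y p = τ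

section Polytope

omit [DecidableEq E]
variable {s t : E → V} {τ : ℕ} {y : E × Bool → ℝ}

theorem nonneg_of_mem_nzPolytope (hy : y ∈ nzPolytope s t τ) : 0 ≤ y := fun ⟨e, b⟩ => by
  rw [Pi.zero_apply]
  cases b <;> linarith [(hy.1 e).1, (hy.1 e).2.1]

theorem mem_bot_false_iff_of_mem_nzPolytope (hy : y ∈ nzPolytope s t τ) (e : E) :
    y (e, false) ∈ (⊥ : Subring ℝ) ↔ y (e, true) ∈ (⊥ : Subring ℝ) := by
  rw [eq_sub_of_add_eq' (hy.1 e).2.2]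
  refine ⟨fun h => ?_, sub_mem (natCast_mem _ τ)⟩
  simpa using sub_mem (natCast_mem _ τ) h

theorem one_lt_of_mem_nzPolytope (hy : y ∈ nzPolytope s t τ) {e : E}
    (he : y (e, true) ∉ (⊥ : Subring ℝ)) : 1 < y (e, true) ∧ 1 < y (e, false) :=
  ⟨(hy.1 e).1.lt_of_ne fun h => he (h ▸ one_mem _),
    (hy.1 e).2.1.lt_of_ne fun h => he ((mem_bot_false_iff_of_mem_nzPolytope hy e).1 (h ▸ one_mem _))⟩

theorem IsTightCut.inter_union (hy : y ∈ nzPolytope s t τ) {U W : Finset V}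
    (hU : IsTightCut s t τ y U) (hW : IsTightCut s t τ y W) (hUW : ¬ CrossFree U W) :
    IsTightCut s t τ y (U ∩ W) ∧ IsTightCut s t τ y (U ∪ W) := by
  have hinter_ne : (U ∩ W).Nonempty := nonempty_iff_ne_empty.2 fun h =>
    hUW (Or.inr (Or.inr (Or.inl (disjoint_iff_inter_eq_empty.2 h))))
  have hinter_ne_univ : U ∩ W ≠ univ := fun h =>
    hU.2.1 (univ_subset_iff.1 (h ▸ inter_subset_left))
  have hunion_ne := hU.1.mono (subset_union_left (s₂ := W))
  have hunion_ne_univ : U ∪ W ≠ univ := fun h =>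
    hUW (Or.inr (Or.inr (Or.inr (codisjoint_iff.2 h))))
  have hinter := hy.2 _ hinter_ne hinter_ne_univ
  have hunion := hy.2 _ hunion_ne hunion_ne_univ
  have := sum_outArcs_inter_add_sum_outArcs_union_le (bsrc s t) (btgt s t) (nonneg_of_mem_nzPolytope hy) U W
  rw [hU.2.2, hW.2.2] at this
  exact ⟨⟨hinter_ne, hinter_ne_univ, by linarith⟩, ⟨hunion_ne, hunion_ne_univ, by linarith⟩⟩

theorem IsTightCut.sum_cutSign_mem_bot (hy : y ∈ nzPolytope s t τ) {U : Finset V}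
    (hU : IsTightCut s t τ y U) {F : Finset E} (hF : ∀ e ∉ F, y (e, true) ∈ (⊥ : Subring ℝ)) :
    ∑ e ∈ F, cutSign s t U e * y (e, true) ∈ (⊥ : Subring ℝ) := by
  classical
  have h := hU.2.2
  rw [sum_outArcs_of_add_eq s t U fun e => (hy.1 e).2.2] at h
  have hall : ∑ e, cutSign s t U e * y (e, true) ∈ (⊥ : Subring ℝ) := by
    rw [eq_sub_of_add_eq h]
    exact sub_mem (natCast_mem _ τ)
      (mul_mem (natCast_mem _ τ) (sum_mem fun e _ => by split_ifs <;> simp))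
  rw [← sum_sdiff (subset_univ F)] at hall
  refine (add_mem_cancel_left (sum_mem fun e he => ?_)).1 hall
  exact mul_mem (cutSign_mem_bot s t U e) (hF e (mem_sdiff.1 he).2)

theorem exists_orthogonal_tightCuts (hy : y ∈ nzPolytope s t τ) {F : Finset E}
    (hF : F.Nonempty) (hFy : ∀ e, e ∈ F ↔ y (e, true) ∉ (⊥ : Subring ℝ)) :
    ∃ d : E → ℝ, (∀ e ∉ F, d e = 0) ∧ d ≠ 0 ∧
      ∀ U, IsTightCut s t τ y U → ∑ e, cutSign s t U e * d e = 0 := by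
  classical
  have hyF : ∀ e ∉ F, y (e, true) ∈ (⊥ : Subring ℝ) := fun e he => not_not.1 (mt (hFy e).2 he)
  set T := univ.filter (IsTightCut s t τ y)
  obtain ⟨L, hL⟩ := (Set.toFinite {L : Finset (Finset V) |
    L ⊆ T ∧ (L : Set (Finset V)).Pairwise CrossFree}).exists_maximal ⟨∅, empty_subset _, by simp⟩
  obtain ⟨d, hdF, hd, hdL⟩ := exists_orthogonal_of_crossFree L hL.prop.2 s t hF
    (fun e => (hFy e).1) fun U hU => (mem_filter.1 (hL.prop.1 hU)).2.sum_cutSign_mem_bot hy hyF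
  have hdT : ∀ U ∈ T, ∑ e ∈ F, cutSign s t U e * d e = 0 :=
    eq_zero_of_maximal_crossFree
      (fun U hU W hW hUW => by
        simpa [T] using (mem_filter.1 hU).2.inter_union hy (mem_filter.1 hW).2 hUW)
      (fun U W _ => by
        simp only [inf_eq_inter, sup_eq_union, ← sum_add_distrib, ← add_mul,
          cutSign_inter_add_cutSign_union])
      hL hdL
  refine ⟨d, hdF, hd, fun U hU => ?_⟩
  rw [← sum_subset (subset_univ F) fun e _ he => by rw [hdF e he, mul_zero]]
  exact hdT U (mem_filter.2 ⟨mem_univ U, hU⟩)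

theorem eventually_add_smul_mem_nzPolytope (hy : y ∈ nzPolytope s t τ) {d : E → ℝ}
    (hbox : ∀ e, d e ≠ 0 → 1 < y (e, true) ∧ 1 < y (e, false))
    (htight : ∀ U, IsTightCut s t τ y U → ∑ e, cutSign s t U e * d e = 0) :
    ∀ᶠ η in 𝓝 (0 : ℝ),
      y + η • (fun p : E × Bool => if p.2 then d p.1 else -d p.1) ∈ nzPolytope s t τ := by
  set D : E × Bool → ℝ := fun p => if p.2 then d p.1 else -d p.1
  have hbox' : ∀ᶠ η in 𝓝 (0 : ℝ), ∀ e,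
      1 ≤ y (e, true) + η * d e ∧ 1 ≤ y (e, false) + η * -d e :=
    eventually_all.2 fun e =>
      (eventually_le_add_mul (hy.1 e).1 fun h => by_contra fun hd => (hbox e hd).1.ne h).and
      (eventually_le_add_mul (hy.1 e).2.1 fun h =>
        neg_eq_zero.2 (by_contra fun hd => (hbox e hd).2.ne h))
  have hcut : ∀ᶠ η in 𝓝 (0 : ℝ), ∀ U : Finset V, U.Nonempty → U ≠ univ →
      (τ : ℝ) ≤ ∑ p ∈ outArcs (bsrc s t) (btgt s t) U, y p + η * ∑ e, cutSign s t U e * d e :=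
    eventually_all.2 fun U => eventually_imp_distrib_left.2 fun hU =>
      eventually_imp_distrib_left.2 fun hU' =>
        eventually_le_add_mul (hy.2 U hU hU') fun h => htight U ⟨hU, hU', h.symm⟩
  filter_upwards [hbox', hcut] with η hη₁ hη₂
  refine ⟨fun e => ⟨(hη₁ e).1, (hη₁ e).2, ?_⟩, fun U hU hU' => ?_⟩
  · simp only [Pi.add_apply, Pi.smul_apply, smul_eq_mul, D, if_true, Bool.false_eq_true,
      if_false]
    linarith [(hy.1 e).2.2]
  · have hD := sum_outArcs_of_add_eq s t U (y := D) (c := 0) fun e => add_neg_cancel (d e)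
    simp only [Pi.add_apply, Pi.smul_apply, smul_eq_mul, sum_add_distrib, ← mul_sum, hD,
      zero_mul, add_zero]
    exact hη₂ U hU hU'

end Polytope

theorem nz_tau_sco_polytope_integral_general (s t : E → V) (τ : ℕ)
    (x : E × Bool → ℝ)
    (hx : x ∈ Set.extremePoints ℝ {y : E × Bool → ℝ |
      (∀ e : E, 1 ≤ y (e, true) ∧ 1 ≤ y (e, false) ∧ y (e, true) + y (e, false) = (τ : ℝ)) ∧
      ∀ U : Finset V, U.Nonempty → U ≠ univ →
        (τ : ℝ) ≤ ∑ p ∈ outArcs (bsrc s t) (btgt s t) U, y p}) :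
    ∀ p : E × Bool, ∃ n : ℤ, x p = (n : ℝ) := by
  classical
  suffices ∀ p, x p ∈ (⊥ : Subring ℝ) from
    fun p => (Subring.mem_bot.1 (this p)).imp fun _ => Eq.symm
  have hxP : x ∈ nzPolytope s t τ := hx.1
  rintro ⟨e₀, b⟩
  by_contra hx₀
  set F := univ.filter fun e => x (e, true) ∉ (⊥ : Subring ℝ)
  have he₀ : e₀ ∈ F := by
    cases b <;> simpa [F, ← mem_bot_false_iff_of_mem_nzPolytope hxP] using hx₀
  obtain ⟨d, hdF, hd, hdT⟩ := exists_orthogonal_tightCuts hxP ⟨e₀, he₀⟩ (by simp [F])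
  refine not_mem_extremePoints_of_eventually_add_smul_mem ?_
    (eventually_add_smul_mem_nzPolytope hxP (fun e he => one_lt_of_mem_nzPolytope hxP
      (mem_filter.1 (of_not_not (mt (hdF e) he))).2) hdT) hx
  obtain ⟨e, he⟩ := Function.ne_iff.1 hd
  exact Function.ne_iff.2 ⟨(e, true), he⟩

/-- The polytope `P₁^τ(G)` of fractional nowhere-zero `τ`-strongly-connected orientations is
integral: every extreme point has integer coordinates. -/
theorem nz_tau_sco_polytope_integral (s t : E → V) (τ : ℕ) (hτ : 1 ≤ τ)
    (x : E × Bool → ℝ)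
    (hx : x ∈ Set.extremePoints ℝ {y : E × Bool → ℝ |
      (∀ e : E, 1 ≤ y (e, true) ∧ 1 ≤ y (e, false) ∧ y (e, true) + y (e, false) = (τ : ℝ)) ∧
      ∀ U : Finset V, U.Nonempty → U ≠ univ →
        (τ : ℝ) ≤ ∑ p ∈ outArcs (bsrc s t) (btgt s t) U, y p}) :
    ∀ p : E × Bool, ∃ n : ℤ, x p = (n : ℝ) :=
  nz_tau_sco_polytope_integral_general s t τ x hx
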